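/- For every natural number n, ∑_{k=0}^{n} C(n,k) (-1)^k h_k/(k+1) = -h_n/(n+1), where h_k is the k-th harmonic number (h_0 = 0). -/

import Mathlib

/-- The `n`-th harmonic number. -/
noncomputable def harm (n : ℕ) : ℝ := ∑ j ∈ Finset.range n, 1 / (j + 1 : ℝ)

/-!
Since `C(n, k) / (k + 1) = C(n + 1, k + 1) / (n + 1)`, the sum equals `W n / (n + 1)` with
`W n = ∑ₖ C(n + 1, k + 1) (-1)ᵏ hₖ`. Pascal's rule gives `W (n + 1) = W n + T (n + 1)` with
`T m = ∑ₖ C(m, k) (-1)ᵏ hₖ`, and, combined with `hₖ₊₁ = hₖ + 1 / (k + 1)`, also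
`T (m + 1) = -∑ₖ C(m, k) (-1)ᵏ / (k + 1) = -1 / (m + 1)`. Hence `W n = -hₙ` by induction.
-/

open Finset

@[simp]
lemma harm_zero : harm 0 = 0 := by simp [harm]

lemma harm_succ (n : ℕ) : harm (n + 1) = harm n + 1 / (n + 1) := by
  simp [harm, sum_range_succ]

lemma sum_choose_succ_mul_neg_one_pow {R : Type*} [CommRing R] (n : ℕ) :
    ∑ k ∈ range (n + 1), ((n + 1).choose (k + 1) : R) * (-1) ^ k = 1 := by
  have h := congrArg (Int.cast : ℤ → R) (Int.alternating_sum_range_choose_of_ne n.succ_ne_zero)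
  push_cast at h
  rw [sum_range_succ'] at h
  simp only [pow_succ, mul_neg_one, neg_mul, sum_neg_distrib, pow_zero, Nat.choose_zero_right,
    Nat.cast_one, mul_one] at h
  exact (sum_congr rfl fun _ _ => mul_comm _ _).trans (neg_add_eq_zero.mp h)

section Field

variable {K : Type*} [Field K] [CharZero K]

lemma choose_div_succ (n k : ℕ) :
    (n.choose k : K) / (k + 1) = ((n + 1).choose (k + 1) : K) / (n + 1) := by
  rw [div_eq_div_iff k.cast_add_one_ne_zero n.cast_add_one_ne_zero]
  exact_mod_cast (mul_comm _ _).trans (Nat.add_one_mul_choose_eq n k)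

lemma sum_choose_mul_neg_one_pow_div_succ (n : ℕ) :
    ∑ k ∈ range (n + 1), (n.choose k : K) * (-1) ^ k / (k + 1) = 1 / (n + 1) := by
  calc ∑ k ∈ range (n + 1), (n.choose k : K) * (-1) ^ k / (k + 1)
      = (∑ k ∈ range (n + 1), ((n + 1).choose (k + 1) : K) * (-1) ^ k) / (n + 1) := by
        rw [sum_div]
        refine sum_congr rfl fun k _ => ?_
        rw [mul_div_right_comm, choose_div_succ, div_mul_eq_mul_div]
    _ = 1 / (n + 1) := by rw [sum_choose_succ_mul_neg_one_pow]

end Field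

lemma sum_choose_mul_neg_one_pow_mul_harm (n : ℕ) :
    ∑ k ∈ range (n + 2), ((n + 1).choose k : ℝ) * (-1) ^ k * harm k = -1 / (n + 1) := by
  have pascal := sum_choose_succ_mul (fun k _ => (-1 : ℝ) ^ k * harm k) n
  simp only [← mul_assoc] at pascal
  have shifted : ∑ k ∈ range (n + 1), (n.choose k : ℝ) * (-1) ^ (k + 1) * harm (k + 1)
      = -∑ k ∈ range (n + 1), (n.choose k : ℝ) * (-1) ^ k * harm k
        - ∑ k ∈ range (n + 1), (n.choose k : ℝ) * (-1) ^ k / (k + 1) := by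
    rw [← sum_neg_distrib, ← sum_sub_distrib]
    refine sum_congr rfl fun k _ => ?_
    rw [harm_succ]
    ring
  rw [pascal, shifted, sum_choose_mul_neg_one_pow_div_succ]
  ring

lemma sum_choose_succ_mul_neg_one_pow_mul_harm (n : ℕ) :
    ∑ k ∈ range (n + 1), ((n + 1).choose (k + 1) : ℝ) * (-1) ^ k * harm k = -harm n := by
  induction n with
  | zero => simp
  | succ n ih =>
    have pascal : ∑ k ∈ range (n + 2), ((n + 2).choose (k + 1) : ℝ) * (-1) ^ k * harm k
        = ∑ k ∈ range (n + 2), ((n + 1).choose (k + 1) : ℝ) * (-1) ^ k * harm k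
          + ∑ k ∈ range (n + 2), ((n + 1).choose k : ℝ) * (-1) ^ k * harm k := by
      rw [← sum_add_distrib]
      refine sum_congr rfl fun k _ => ?_
      rw [Nat.choose_succ_succ]
      push_cast
      ring
    rw [pascal, sum_range_succ, ih, Nat.choose_succ_self, sum_choose_mul_neg_one_pow_mul_harm,
      harm_succ]
    push_cast
    ring

theorem binom_alt_harmonic_div_succ (n : ℕ) :
    ∑ k ∈ Finset.range (n + 1),
      (n.choose k : ℝ) * (-1) ^ k * harm k / (k + 1) = -harm n / (n + 1) := by
  calc ∑ k ∈ range (n + 1), (n.choose k : ℝ) * (-1) ^ k * harm k / (k + 1)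
      = (∑ k ∈ range (n + 1), ((n + 1).choose (k + 1) : ℝ) * (-1) ^ k * harm k) / (n + 1) := by
        rw [sum_div]
        refine sum_congr rfl fun k _ => ?_
        rw [mul_assoc, mul_div_right_comm, choose_div_succ, div_mul_eq_mul_div, mul_assoc]
    _ = -harm n / (n + 1) := by rw [sum_choose_succ_mul_neg_one_pow_mul_harm]
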